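/- Let (Ω, 𝓕, P) be a probability space, let p > 2 be real, and let U, U′, V, V′ be real random variables with E[|U|^p] < ∞, E[|U′|^p] < ∞, E[|V|^p] < ∞ and E[|V′|^p] < ∞. Let A, B ∈ 𝓕 be events with U·1_{Aᶜ} = U′·1_{Aᶜ} almost surely and V·1_{Bᶜ} = V′·1_{Bᶜ} almost surely. Then |E[(U − U′)·(V − V′)]| ≤ (‖U‖_p + ‖U′‖_p) · (‖V‖_p + ‖V′‖_p) · P(A)^{1/2 − 1/p} · P(B)^{1/2 − 1/p}. -/

import Mathlib

/-!
Off `A` the difference `U - U'` vanishes, and off `B` so does `V - V'`, so the integrand is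
`(1_A (U - U')) (1_B (V - V'))`. Cauchy–Schwarz bounds its integral by the two `L²` norms, and
Hölder on a set of measure `m` gives `‖1_A f‖₂ ≤ ‖f‖_p m ^ (1/2 - 1/p)`; Minkowski then splits
`‖U - U'‖_p ≤ ‖U‖_p + ‖U'‖_p`.
-/

open MeasureTheory ProbabilityTheory
open scoped ENNReal

namespace MeasureTheory

variable {α E : Type*} [MeasurableSpace α] {μ : Measure α} [NormedAddCommGroup E]

theorem memLp_ofReal_of_integrable_abs_rpow {p : ℝ} (hp : 0 < p) {f : α → ℝ}
    (hf : AEStronglyMeasurable f μ) (hfp : Integrable (fun x => |f x| ^ p) μ) :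
    MemLp f (ENNReal.ofReal p) μ := by
  have hp0 : ENNReal.ofReal p ≠ 0 := by simpa using hp
  rw [← memLp_norm_rpow_iff hf hp0 ENNReal.ofReal_ne_top, ENNReal.div_self hp0 ENNReal.ofReal_ne_top,
    memLp_one_iff_integrable]
  simpa [ENNReal.toReal_ofReal hp.le, Real.norm_eq_abs] using hfp

theorem MemLp.toReal_eLpNorm_ofReal {p : ℝ} (hp : 0 < p) {f : α → ℝ}
    (hf : MemLp f (ENNReal.ofReal p) μ) :
    (eLpNorm f (ENNReal.ofReal p) μ).toReal = (∫ x, |f x| ^ p ∂μ) ^ (1 / p) := by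
  rw [hf.eLpNorm_eq_integral_rpow_norm (by simpa using hp) ENNReal.ofReal_ne_top,
    ENNReal.toReal_ofReal (by positivity)]
  simp [ENNReal.toReal_ofReal hp.le, Real.norm_eq_abs]

theorem toReal_eLpNorm_sub_le {p : ℝ≥0∞} (hp : 1 ≤ p) {f g : α → E}
    (hf : MemLp f p μ) (hg : MemLp g p μ) :
    (eLpNorm (f - g) p μ).toReal ≤ (eLpNorm f p μ).toReal + (eLpNorm g p μ).toReal :=
  ENNReal.toReal_le_add (eLpNorm_sub_le hf.1 hg.1 hp) hf.eLpNorm_ne_top hg.eLpNorm_ne_top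

theorem abs_integral_mul_le_eLpNorm_two_mul {f g : α → ℝ} (hf : MemLp f 2 μ) (hg : MemLp g 2 μ) :
    |∫ x, f x * g x ∂μ| ≤ (eLpNorm f 2 μ).toReal * (eLpNorm g 2 μ).toReal := by
  have hinner : ∫ x, f x * g x ∂μ = inner ℝ (hf.toLp f) (hg.toLp g) := by
    rw [L2.inner_def]
    refine integral_congr_ae ?_
    filter_upwards [hf.coeFn_toLp, hg.coeFn_toLp] with x hfx hgx
    simp [hfx, hgx, mul_comm]
  rw [hinner, ← Lp.norm_toLp f hf, ← Lp.norm_toLp g hg]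
  exact abs_real_inner_le_norm _ _

theorem eLpNorm_indicator_le_mul_measure_rpow {p q : ℝ≥0∞} (hpq : p ≤ q) {s : Set α}
    (hs : MeasurableSet s) {f : α → E} (hf : AEStronglyMeasurable f μ) :
    eLpNorm (s.indicator f) p μ ≤ eLpNorm f q μ * μ s ^ (1 / p.toReal - 1 / q.toReal) := by
  rw [eLpNorm_indicator_eq_eLpNorm_restrict hs]
  calc eLpNorm f p (μ.restrict s)
      ≤ eLpNorm f q (μ.restrict s) * μ.restrict s Set.univ ^ (1 / p.toReal - 1 / q.toReal) :=
        eLpNorm_le_eLpNorm_mul_rpow_measure_univ hpq hf.restrict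
    _ ≤ eLpNorm f q μ * μ s ^ (1 / p.toReal - 1 / q.toReal) := by
        rw [Measure.restrict_apply_univ]
        gcongr
        exact Measure.restrict_le_self

theorem abs_integral_indicator_mul_indicator_le [IsFiniteMeasure μ] {p : ℝ≥0∞} (hp : 2 ≤ p)
    {f g : α → ℝ} (hf : MemLp f p μ) (hg : MemLp g p μ) {s t : Set α}
    (hs : MeasurableSet s) (ht : MeasurableSet t) :
    |∫ x, s.indicator f x * t.indicator g x ∂μ| ≤
      (eLpNorm f p μ).toReal * (eLpNorm g p μ).toReal
        * (μ s).toReal ^ (1 / 2 - 1 / p.toReal) * (μ t).toReal ^ (1 / 2 - 1 / p.toReal) := by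
  have hexp : 0 ≤ 1 / 2 - 1 / p.toReal := by
    rcases eq_or_ne p ∞ with rfl | hp_top
    · norm_num
    · have h2 : (2 : ℝ) ≤ p.toReal := by
        simpa using (ENNReal.toReal_le_toReal (by norm_num) hp_top).2 hp
      rw [sub_nonneg]
      gcongr
  have hL2 : ∀ {h : α → ℝ} {u : Set α}, MemLp h p μ → MeasurableSet u →
      (eLpNorm (u.indicator h) 2 μ).toReal ≤ (eLpNorm h p μ).toReal * (μ u).toReal ^ (1 / 2 - 1 / p.toReal) := by
    intro h u hh hu
    rw [ENNReal.toReal_rpow, ← ENNReal.toReal_mul]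
    refine ENNReal.toReal_mono ?_ ?_
    · exact ENNReal.mul_ne_top hh.eLpNorm_ne_top (ENNReal.rpow_ne_top_of_nonneg hexp (measure_ne_top μ u))
    · simpa using eLpNorm_indicator_le_mul_measure_rpow hp hu hh.1
  calc |∫ x, s.indicator f x * t.indicator g x ∂μ|
      ≤ (eLpNorm (s.indicator f) 2 μ).toReal * (eLpNorm (t.indicator g) 2 μ).toReal :=
        abs_integral_mul_le_eLpNorm_two_mul ((hf.indicator hs).mono_exponent hp)
          ((hg.indicator ht).mono_exponent hp)
    _ ≤ (eLpNorm f p μ).toReal * (μ s).toReal ^ (1 / 2 - 1 / p.toReal)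
          * ((eLpNorm g p μ).toReal * (μ t).toReal ^ (1 / 2 - 1 / p.toReal)) := by
        gcongr
        exacts [hL2 hf hs, hL2 hg ht]
    _ = _ := by ring

theorem sub_ae_eq_indicator_of_mul_indicator_compl_ae_eq {f g : α → ℝ} {s : Set α}
    (h : (fun x => f x * sᶜ.indicator (fun _ => (1 : ℝ)) x)
      =ᵐ[μ] fun x => g x * sᶜ.indicator (fun _ => (1 : ℝ)) x) :
    f - g =ᵐ[μ] s.indicator (f - g) := by
  filter_upwards [h] with x hx
  by_cases hxs : x ∈ s
  · simp [hxs]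
  · simp only [Set.indicator_of_mem (Set.mem_compl hxs), mul_one] at hx
    simp [hxs, hx]

end MeasureTheory

/-- the two-event estimate used in Lemmas 6.1 and 6.2. -/
theorem difference_correlation_bound_two_events {Ω : Type*} [MeasureSpace Ω]
    [IsProbabilityMeasure (ℙ : Measure Ω)]
    (p : ℝ) (hp : 2 < p)
    (U U' V V' : Ω → ℝ)
    (hU : Measurable U) (hU' : Measurable U')
    (hV : Measurable V) (hV' : Measurable V')
    (hUp : Integrable (fun ω => |U ω| ^ p))
    (hU'p : Integrable (fun ω => |U' ω| ^ p))
    (hVp : Integrable (fun ω => |V ω| ^ p))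
    (hV'p : Integrable (fun ω => |V' ω| ^ p))
    (A B : Set Ω) (hA : MeasurableSet A) (hB : MeasurableSet B)
    (heqU : (fun ω => U ω * Aᶜ.indicator (fun _ => (1 : ℝ)) ω)
        =ᵐ[ℙ] fun ω => U' ω * Aᶜ.indicator (fun _ => (1 : ℝ)) ω)
    (heqV : (fun ω => V ω * Bᶜ.indicator (fun _ => (1 : ℝ)) ω)
        =ᵐ[ℙ] fun ω => V' ω * Bᶜ.indicator (fun _ => (1 : ℝ)) ω) :
    |∫ ω, (U ω - U' ω) * (V ω - V' ω)| ≤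
      ((∫ ω, |U ω| ^ p) ^ (1 / p) + (∫ ω, |U' ω| ^ p) ^ (1 / p))
        * ((∫ ω, |V ω| ^ p) ^ (1 / p) + (∫ ω, |V' ω| ^ p) ^ (1 / p))
        * (ℙ A).toReal ^ (1 / 2 - 1 / p) * (ℙ B).toReal ^ (1 / 2 - 1 / p) := by
  have hp0 : 0 < p := by linarith
  have h2p : (2 : ℝ≥0∞) ≤ ENNReal.ofReal p := by
    simpa using ENNReal.ofReal_le_ofReal hp.le
  have h1p : (1 : ℝ≥0∞) ≤ ENNReal.ofReal p := le_trans (by norm_num) h2p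
  have hUm := memLp_ofReal_of_integrable_abs_rpow hp0 hU.aestronglyMeasurable hUp
  have hU'm := memLp_ofReal_of_integrable_abs_rpow hp0 hU'.aestronglyMeasurable hU'p
  have hVm := memLp_ofReal_of_integrable_abs_rpow hp0 hV.aestronglyMeasurable hVp
  have hV'm := memLp_ofReal_of_integrable_abs_rpow hp0 hV'.aestronglyMeasurable hV'p
  calc |∫ ω, (U ω - U' ω) * (V ω - V' ω)|
      = |∫ ω, A.indicator (U - U') ω * B.indicator (V - V') ω| := by
        congr 1
        exact integral_congr_ae ((sub_ae_eq_indicator_of_mul_indicator_compl_ae_eq heqU).mul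
          (sub_ae_eq_indicator_of_mul_indicator_compl_ae_eq heqV))
    _ ≤ (eLpNorm (U - U') (ENNReal.ofReal p) ℙ).toReal * (eLpNorm (V - V') (ENNReal.ofReal p) ℙ).toReal
          * (ℙ A).toReal ^ (1 / 2 - 1 / p) * (ℙ B).toReal ^ (1 / 2 - 1 / p) := by
        simpa [ENNReal.toReal_ofReal hp0.le] using
          abs_integral_indicator_mul_indicator_le h2p (hUm.sub hU'm) (hVm.sub hV'm) hA hB
    _ ≤ _ := by
        rw [← hUm.toReal_eLpNorm_ofReal hp0, ← hU'm.toReal_eLpNorm_ofReal hp0,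
          ← hVm.toReal_eLpNorm_ofReal hp0, ← hV'm.toReal_eLpNorm_ofReal hp0]
        gcongr
        exacts [toReal_eLpNorm_sub_le h1p hUm hU'm, toReal_eLpNorm_sub_le h1p hVm hV'm]
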